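/- For each index i ∈ {1,2,3,4}, the extended solid angle α̃ᵢ : (0,∞)⁴ → ℝ is a continuous function on (0,∞)⁴ (extending αᵢ from Ω). -/
import Mathlib


open Real Finset Filter

/-- `y i = coth r i`. -/
noncomputable def yc (r : Fin 4 → ℝ) (i : Fin 4) : ℝ := Real.cosh (r i) / Real.sinh (r i)

/-- The quantity `Q(r)` whose positivity characterizes non-degenerate hyperbolic tetrahedra. -/
noncomputable def Qh (r : Fin 4 → ℝ) : ℝ :=
  (∑ i, yc r i) ^ 2 - 2 * ∑ i, (yc r i) ^ 2 + 4

/-- The set of real ball packings of a tetrahedron. -/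
noncomputable def OmegaSet : Set (Fin 4 → ℝ) := {r | (∀ i, 0 < r i) ∧ 0 < Qh r}

/-- The `i`-th virtual tetrahedron space `Dᵢ`. -/
noncomputable def Dset (i : Fin 4) : Set (Fin 4 → ℝ) :=
  {r | (∀ m, 0 < r m) ∧
    (∑ j ∈ Finset.univ.erase i, yc r j)
      + 2 * Real.sqrt (((∑ j ∈ Finset.univ.erase i, yc r j) ^ 2
          - ∑ j ∈ Finset.univ.erase i, (yc r j) ^ 2) / 2 + 1) ≤ yc r i}

/-- The dihedral angle `β i j` of the hyperbolic tetrahedron determined by `r`. -/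
noncomputable def betaAngle (r : Fin 4 → ℝ) (i j : Fin 4) : ℝ :=
  Real.arccos
    ((Real.sinh (r i) * Real.sinh (r j)
        * Real.sqrt (∏ m ∈ (Finset.univ.erase i).erase j, Real.sinh (r m)))
      / (4 * Real.sqrt (∏ m ∈ (Finset.univ.erase i).erase j, Real.sinh (r i + r j + r m)))
      * (Qh r - (yc r i + yc r j) ^ 2
          + ((∑ m ∈ (Finset.univ.erase i).erase j, yc r m) ^ 2
              - 4 * ∏ m ∈ (Finset.univ.erase i).erase j, yc r m)))

/-- The solid angle `αᵢ` of the hyperbolic tetrahedron determined by `r`. -/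
noncomputable def solidAngle (r : Fin 4 → ℝ) (i : Fin 4) : ℝ :=
  (∑ j ∈ Finset.univ.erase i, betaAngle r i j) - Real.pi

open Classical in
/-- The extended solid angle `α̃ᵢ`. -/
noncomputable def tildeAlpha (r : Fin 4 → ℝ) (i : Fin 4) : ℝ :=
  if r ∈ OmegaSet then solidAngle r i
  else if r ∈ Dset i then 2 * Real.pi else 0

/-- Given a ball packing `r` on the vertex set `Fin N`, a vertex `i` and a tetrahedron `s`
containing `i`, the associated local packing in `(0,∞)⁴`, with the radius of `i` first. -/
noncomputable def localPacking {N : ℕ} (r : Fin N → ℝ) (i : Fin N) (s : Finset (Fin N)) :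
    Fin 4 → ℝ :=
  fun m => if m = 0 then r i
    else r (((s.erase i).sort (· ≤ ·)).getD (m.val - 1) i)

/-- The extended combinatorial scalar curvature `K̃ᵢ(r)`. -/
noncomputable def Ktilde {N : ℕ} (T3 : Multiset (Finset (Fin N))) (r : Fin N → ℝ)
    (i : Fin N) : ℝ :=
  4 * Real.pi -
    ((T3.filter (fun s => i ∈ s)).map (fun s => tildeAlpha (localPacking r i s) 0)).sum

/-- The tetra-degree of the vertex `i`. -/
def tetraDegree {N : ℕ} (T3 : Multiset (Finset (Fin N))) (i : Fin N) : ℕ :=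
  (T3.filter (fun s => i ∈ s)).card

/-- `R` is a solution of the extended combinatorial Yamabe flow on the time domain `S`. -/
def IsExtYamabeFlowSolution {N : ℕ} (T3 : Multiset (Finset (Fin N)))
    (R : ℝ → Fin N → ℝ) (S : Set ℝ) : Prop :=
  (∀ t ∈ S, ∀ i, 0 < R t i) ∧
  ∀ t ∈ S, ∀ i, HasDerivWithinAt (fun u => R u i)
      (-(Ktilde T3 (R t) i) * Real.sinh (R t i)) S t


noncomputable section ExtraLemmas

def QY (a b c d : ℝ) : ℝ := (a+b+c+d)^2 - 2*(a^2+b^2+c^2+d^2) + 4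
def TY (a b c d : ℝ) : ℝ := QY a b c d - (a+b)^2 + ((c+d)^2 - 4*(c*d))
def PY (a b c : ℝ) : ℝ := a*b + b*c + c*a + 1
def DY (a b c d : ℝ) : Prop := b + c + d + 2 * Real.sqrt (b*c + c*d + d*b + 1) ≤ a

lemma key_identity (a b c d : ℝ) :
    (TY a b c d)^2 - 16 * (PY a b c * PY a b d) = -4 * QY a b c d * (a+b)^2 := by
  unfold TY QY PY; ring

lemma PY_pos {a b c : ℝ} (ha : 0 < a) (hb : 0 < b) (hc : 0 < c) : 0 < PY a b c := by
  unfold PY; positivity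

lemma DY_big {a b c d : ℝ} (hb : 1 < b) (hc : 1 < c) (hd : 1 < d) (h : DY a b c d) :
    b + c + d + 4 ≤ a := by
  have h2 : (2:ℝ) ≤ Real.sqrt (b*c + c*d + d*b + 1) := by
    rw [Real.le_sqrt (by norm_num) (by nlinarith)]
    nlinarith
  unfold DY at h; linarith

lemma DY_perm {a b c d : ℝ} (h : DY a b c d) : DY a c b d ∧ DY a b d c ∧ DY a c d b := by
  unfold DY at *
  refine ⟨?_, ?_, ?_⟩ <;>
    [ (rw [show c*b + b*d + d*c = b*c + c*d + d*b by ring]);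
      (rw [show b*d + d*c + c*b = b*c + c*d + d*b by ring]);
      (rw [show c*d + d*b + b*c = b*c + c*d + d*b by ring])] <;> linarith

lemma QY_nonpos_of_DY {a b c d : ℝ} (hb : 0 < b) (hc : 0 < c) (hd : 0 < d)
    (h : DY a b c d) : QY a b c d ≤ 0 := by
  set R := Real.sqrt (b*c + c*d + d*b + 1) with hR
  have hRnn : 0 ≤ R := Real.sqrt_nonneg _
  have hR2 : R^2 = b*c + c*d + d*b + 1 := Real.sq_sqrt (by positivity)
  unfold DY at h
  unfold QY
  nlinarith [mul_nonneg (by linarith : (0:ℝ) ≤ a - (b+c+d) - 2*R)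
    (by linarith : (0:ℝ) ≤ a - (b+c+d) + 2*R)]

lemma DY_not_two {a b c d : ℝ} (hc : 1 < c) (hd : 1 < d)
    (h1 : DY a b c d) (h2 : DY b a c d) : False := by
  have s1 := Real.sqrt_nonneg (b*c + c*d + d*b + 1)
  have s2 := Real.sqrt_nonneg (a*c + c*d + d*a + 1)
  unfold DY at h1 h2
  linarith

lemma DY_of_max' {a b c d : ℝ} (hb : 1 < b) (hc : 1 < c) (hd : 1 < d)
    (hab : b ≤ a) (hbc : c ≤ b) (hbd : d ≤ b) (hQ : QY a b c d ≤ 0) : DY a b c d := by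
  set R := Real.sqrt (b*c + c*d + d*b + 1) with hR
  have hRnn : 0 ≤ R := Real.sqrt_nonneg _
  have hR2 : R^2 = b*c + c*d + d*b + 1 := Real.sq_sqrt (by positivity)
  have hQ' : (a - (b+c+d))^2 ≥ 4*(R^2) := by unfold QY at hQ; nlinarith
  unfold DY
  rcases le_or_gt (b+c+d) a with hcase | hcase
  · nlinarith [sq_nonneg (a - (b+c+d) - 2*R)]
  · exfalso
    have h1 : b+c+d - a ≤ c + d := by linarith
    have h0 : 0 ≤ b+c+d - a := by linarith
    nlinarith [sq_nonneg (c-d)]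

lemma DY_of_max {a b c d : ℝ} (hb : 1 < b) (hc : 1 < c) (hd : 1 < d)
    (hab : b ≤ a) (hac : c ≤ a) (had : d ≤ a) (hQ : QY a b c d ≤ 0) : DY a b c d := by
  rcases le_total c b with h1 | h1
  · rcases le_total d b with h2 | h2
    · exact DY_of_max' hb hc hd hab h1 h2 hQ
    · -- d is max of b,c,d : use order (a d b c)
      have hQ' : QY a d b c ≤ 0 := by
        rw [show QY a d b c = QY a b c d by unfold QY; ring]; exact hQ
      have h := DY_of_max' hd hb hc had h2 (le_trans h1 h2) hQ'
      exact (DY_perm h).2.2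
  · rcases le_total d c with h2 | h2
    · -- c is max : order (a c b d)
      have hQ' : QY a c b d ≤ 0 := by
        rw [show QY a c b d = QY a b c d by unfold QY; ring]; exact hQ
      have h := DY_of_max' hc hb hd hac h1 h2 hQ'
      exact (DY_perm h).1
    · -- d is max : order (a d b c)
      have hQ' : QY a d b c ≤ 0 := by
        rw [show QY a d b c = QY a b c d by unfold QY; ring]; exact hQ
      have h := DY_of_max' hd hb hc had (le_trans h1 h2) h2 hQ'
      exact (DY_perm h).2.2

lemma arg_le_neg_one {a b c d : ℝ} (ha : 0 < a) (hb : 0 < b) (hc : 0 < c) (hd : 0 < d)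
    (hQ : QY a b c d ≤ 0) (hT : TY a b c d ≤ 0) :
    TY a b c d / (4 * Real.sqrt (PY a b c * PY a b d)) ≤ -1 := by
  have hP : 0 < PY a b c * PY a b d := mul_pos (PY_pos ha hb hc) (PY_pos ha hb hd)
  have hsP : 0 < Real.sqrt (PY a b c * PY a b d) := Real.sqrt_pos.2 hP
  have h16 : (4 * Real.sqrt (PY a b c * PY a b d))^2 ≤ (TY a b c d)^2 := by
    rw [mul_pow, Real.sq_sqrt hP.le]
    nlinarith [key_identity a b c d, mul_nonneg (by linarith : (0:ℝ) ≤ -QY a b c d) (sq_nonneg (a+b))]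
  have h := Real.sqrt_le_sqrt h16
  rw [Real.sqrt_sq (by positivity), Real.sqrt_sq_eq_abs, abs_of_nonpos hT] at h
  rw [div_le_iff₀ (by positivity)]
  linarith

lemma arg_ge_one {a b c d : ℝ} (ha : 0 < a) (hb : 0 < b) (hc : 0 < c) (hd : 0 < d)
    (hQ : QY a b c d ≤ 0) (hT : 0 ≤ TY a b c d) :
    1 ≤ TY a b c d / (4 * Real.sqrt (PY a b c * PY a b d)) := by
  have hP : 0 < PY a b c * PY a b d := mul_pos (PY_pos ha hb hc) (PY_pos ha hb hd)
  have hsP : 0 < Real.sqrt (PY a b c * PY a b d) := Real.sqrt_pos.2 hP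
  have h16 : (4 * Real.sqrt (PY a b c * PY a b d))^2 ≤ (TY a b c d)^2 := by
    rw [mul_pow, Real.sq_sqrt hP.le]
    nlinarith [key_identity a b c d, mul_nonneg (by linarith : (0:ℝ) ≤ -QY a b c d) (sq_nonneg (a+b))]
  have h := Real.sqrt_le_sqrt h16
  rw [Real.sqrt_sq (by positivity), Real.sqrt_sq_eq_abs, abs_of_nonneg hT] at h
  rw [le_div_iff₀ (by positivity)]
  linarith

lemma T_nonpos_first {a b c d : ℝ} (ha : 1 < a) (hb : 1 < b) (hc : 1 < c) (hd : 1 < d)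
    (h : DY a b c d) : TY a b c d ≤ 0 := by
  have hbig := DY_big hb hc hd h
  have h1 : 0 ≤ (a - (b+c+d+4)) * a := by nlinarith
  have h2 : 0 ≤ (a + b - (c+d+4)) * b := by nlinarith
  unfold TY QY
  nlinarith [h1, h2]

lemma T_nonpos_second {a b c d : ℝ} (ha : 1 < a) (hb : 1 < b) (hc : 1 < c) (hd : 1 < d)
    (h : DY b a c d) : TY a b c d ≤ 0 := by
  have := T_nonpos_first hb ha hc hd h
  unfold TY QY at *
  linarith [this]

lemma T_nonneg_third {a b c d : ℝ} (ha : 1 < a) (hb : 1 < b) (hc : 1 < c) (hd : 1 < d)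
    (h : DY c a b d) : 0 ≤ TY a b c d := by
  have hbig : a + b + d + 4 ≤ c := DY_big ha hb hd h
  have h1 : 0 ≤ (c - (a+b+d+4)) * (a+b) := by nlinarith
  unfold TY QY
  nlinarith [h1, mul_pos (by linarith : (0:ℝ) < a) (by linarith : (0:ℝ) < b),
    mul_pos (by linarith : (0:ℝ) < a+b) (by linarith : (0:ℝ) < d)]

lemma T_nonneg_fourth {a b c d : ℝ} (ha : 1 < a) (hb : 1 < b) (hc : 1 < c) (hd : 1 < d)
    (h : DY d a b c) : 0 ≤ TY a b c d := by
  have := T_nonneg_third ha hb hd hc h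
  unfold TY QY at *
  linarith [this]

lemma coth_gt_one {x : ℝ} (hx : 0 < x) : 1 < Real.cosh x / Real.sinh x := by
  have hs : 0 < Real.sinh x := by positivity
  rw [lt_div_iff₀ hs, one_mul]
  nlinarith [Real.cosh_sub_sinh x, Real.exp_pos (-x)]

lemma sinh_triple (p q u : ℝ) (hp : Real.sinh p ≠ 0) (hq : Real.sinh q ≠ 0)
    (hu : Real.sinh u ≠ 0) :
    Real.sinh (p+q+u) = Real.sinh p * Real.sinh q * Real.sinh u *
      PY (Real.cosh p / Real.sinh p) (Real.cosh q / Real.sinh q)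
        (Real.cosh u / Real.sinh u) := by
  rw [Real.sinh_add, Real.sinh_add, Real.cosh_add]
  unfold PY
  field_simp
  ring

lemma coeff_eq {p q u v : ℝ} (hp : 0 < p) (hq : 0 < q) (hu : 0 < u) (hv : 0 < v) (E : ℝ) :
    Real.sinh p * Real.sinh q * Real.sqrt (Real.sinh u * Real.sinh v)
      / (4 * Real.sqrt (Real.sinh (p+q+u) * Real.sinh (p+q+v))) * E
    = E / (4 * Real.sqrt
        (PY (Real.cosh p / Real.sinh p) (Real.cosh q / Real.sinh q) (Real.cosh u / Real.sinh u)
          * PY (Real.cosh p / Real.sinh p) (Real.cosh q / Real.sinh q)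
            (Real.cosh v / Real.sinh v))) := by
  have sp : 0 < Real.sinh p := by positivity
  have sq' : 0 < Real.sinh q := by positivity
  have su : 0 < Real.sinh u := by positivity
  have sv : 0 < Real.sinh v := by positivity
  set Pu := PY (Real.cosh p / Real.sinh p) (Real.cosh q / Real.sinh q)
      (Real.cosh u / Real.sinh u) with hPu
  set Pv := PY (Real.cosh p / Real.sinh p) (Real.cosh q / Real.sinh q)
      (Real.cosh v / Real.sinh v) with hPv
  have hPupos : 0 < Pu := PY_pos (by positivity) (by positivity) (by positivity)
  have hPvpos : 0 < Pv := PY_pos (by positivity) (by positivity) (by positivity)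
  have h1 : Real.sinh (p+q+u) * Real.sinh (p+q+v)
      = (Real.sinh p * Real.sinh q)^2 * ((Real.sinh u * Real.sinh v) * (Pu * Pv)) := by
    rw [sinh_triple p q u sp.ne' sq'.ne' su.ne', sinh_triple p q v sp.ne' sq'.ne' sv.ne']
    rw [hPu, hPv]; ring
  rw [h1, Real.sqrt_mul (sq_nonneg _), Real.sqrt_sq (by positivity),
    Real.sqrt_mul (by positivity : (0:ℝ) ≤ Real.sinh u * Real.sinh v)]
  have hsuv : 0 < Real.sqrt (Real.sinh u * Real.sinh v) := Real.sqrt_pos.2 (by positivity)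
  have hsPP : 0 < Real.sqrt (Pu * Pv) := Real.sqrt_pos.2 (by positivity)
  field_simp

lemma DY_213 {a b c d : ℝ} (h : DY a b c d) : DY a c b d := (DY_perm h).1
lemma DY_132 {a b c d : ℝ} (h : DY a b c d) : DY a b d c := (DY_perm h).2.1
lemma DY_312 {a b c d : ℝ} (h : DY a b c d) : DY a d b c :=
  (DY_perm (DY_perm h).2.2).2.2

lemma add_sqrt_congr {s s' u u' a : ℝ} (hs : s = s') (hu : u = u')
    (h : s + 2 * Real.sqrt u ≤ a) : s' + 2 * Real.sqrt u' ≤ a := by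
  rw [← hs, ← hu]; exact h

lemma QY_cover {a b c d : ℝ} (ha : 1 < a) (hb : 1 < b) (hc : 1 < c) (hd : 1 < d)
    (hQ : QY a b c d ≤ 0) :
    DY a b c d ∨ DY b a c d ∨ DY c a b d ∨ DY d a b c := by
  rcases le_total b a with h1 | h1
  · rcases le_total c a with h2 | h2
    · rcases le_total d a with h3 | h3
      · exact Or.inl (DY_of_max hb hc hd h1 h2 h3 hQ)
      · refine Or.inr (Or.inr (Or.inr (DY_of_max ha hb hc h3 (le_trans h1 h3) (le_trans h2 h3) ?_)))
        rw [show QY d a b c = QY a b c d by unfold QY; ring]; exact hQ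
    · rcases le_total d c with h3 | h3
      · refine Or.inr (Or.inr (Or.inl (DY_of_max ha hb hd h2 (le_trans h1 h2) h3 ?_)))
        rw [show QY c a b d = QY a b c d by unfold QY; ring]; exact hQ
      · refine Or.inr (Or.inr (Or.inr (DY_of_max ha hb hc (le_trans h2 h3) (le_trans h1 (le_trans h2 h3)) h3 ?_)))
        rw [show QY d a b c = QY a b c d by unfold QY; ring]; exact hQ
  · rcases le_total c b with h2 | h2
    · rcases le_total d b with h3 | h3
      · refine Or.inr (Or.inl (DY_of_max ha hc hd h1 h2 h3 ?_))
        rw [show QY b a c d = QY a b c d by unfold QY; ring]; exact hQ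
      · refine Or.inr (Or.inr (Or.inr (DY_of_max ha hb hc (le_trans h1 h3) h3 (le_trans h2 h3) ?_)))
        rw [show QY d a b c = QY a b c d by unfold QY; ring]; exact hQ
    · rcases le_total d c with h3 | h3
      · refine Or.inr (Or.inr (Or.inl (DY_of_max ha hb hd (le_trans h1 h2) h2 h3 ?_)))
        rw [show QY c a b d = QY a b c d by unfold QY; ring]; exact hQ
      · refine Or.inr (Or.inr (Or.inr (DY_of_max ha hb hc (le_trans (le_trans h1 h2) h3) (le_trans h2 h3) h3 ?_)))
        rw [show QY d a b c = QY a b c d by unfold QY; ring]; exact hQ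

lemma yc_gt_one {r : Fin 4 → ℝ} (hr : ∀ m, 0 < r m) (m : Fin 4) : 1 < yc r m := by
  unfold yc; exact coth_gt_one (hr m)

lemma beta_eq (r : Fin 4 → ℝ) (hr : ∀ m, 0 < r m) (i j k l : Fin 4)
    (hij : i ≠ j) (hkl : k ≠ l)
    (h1 : (Finset.univ.erase i).erase j = {k, l}) :
    betaAngle r i j = Real.arccos (TY (yc r i) (yc r j) (yc r k) (yc r l)
      / (4 * Real.sqrt (PY (yc r i) (yc r j) (yc r k)
          * PY (yc r i) (yc r j) (yc r l)))) := by
  have hkmem : k ∈ (Finset.univ.erase i).erase j := by rw [h1]; simp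
  have hlmem : l ∈ (Finset.univ.erase i).erase j := by rw [h1]; simp
  have hkj : k ≠ j := (Finset.mem_erase.1 hkmem).1
  have hki : k ≠ i := (Finset.mem_erase.1 (Finset.mem_erase.1 hkmem).2).1
  have hlj : l ≠ j := (Finset.mem_erase.1 hlmem).1
  have hli : l ≠ i := (Finset.mem_erase.1 (Finset.mem_erase.1 hlmem).2).1
  have hje : j ∈ Finset.univ.erase i := Finset.mem_erase.2 ⟨Ne.symm hij, Finset.mem_univ j⟩
  have hnj : j ∉ ({k, l} : Finset (Fin 4)) := by simp [Ne.symm hkj, Ne.symm hlj]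
  have hni : i ∉ insert j ({k, l} : Finset (Fin 4)) := by
    simp [hij, Ne.symm hki, Ne.symm hli]
  have huniv : (Finset.univ : Finset (Fin 4)) = insert i (insert j ({k, l} : Finset (Fin 4))) := by
    rw [← h1, Finset.insert_erase hje, Finset.insert_erase (Finset.mem_univ i)]
  have hQh : Qh r = QY (yc r i) (yc r j) (yc r k) (yc r l) := by
    unfold Qh QY
    rw [huniv]
    simp only [Finset.sum_insert hni, Finset.sum_insert hnj, Finset.sum_pair hkl]
    ring
  unfold betaAngle
  rw [h1]
  simp only [Finset.prod_pair hkl, Finset.sum_pair hkl]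
  rw [hQh]
  congr 1
  have hc := coeff_eq (hr i) (hr j) (hr k) (hr l)
    (QY (yc r i) (yc r j) (yc r k) (yc r l) - (yc r i + yc r j) ^ 2
      + ((yc r k + yc r l) ^ 2 - 4 * (yc r k * yc r l)))
  unfold TY
  unfold yc at hc ⊢
  exact hc

lemma Dset_iff (r : Fin 4 → ℝ) (i j k l : Fin 4)
    (herase : Finset.univ.erase i = {j, k, l})
    (hjk : j ≠ k) (hjl : j ≠ l) (hkl : k ≠ l) :
    r ∈ Dset i ↔ ((∀ m, 0 < r m) ∧ DY (yc r i) (yc r j) (yc r k) (yc r l)) := by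
  have hnj : j ∉ ({k, l} : Finset (Fin 4)) := by simp [hjk, hjl]
  unfold Dset DY
  simp only [Set.mem_setOf_eq, herase, Finset.sum_insert hnj, Finset.sum_pair hkl]
  constructor <;> rintro ⟨hp, hq⟩ <;> refine ⟨hp, ?_⟩ <;>
    exact add_sqrt_congr (by ring) (by ring) hq

lemma solidAngle_eq_two_pi (r : Fin 4 → ℝ) (hr : ∀ m, 0 < r m) (i j k l : Fin 4)
    (herase : Finset.univ.erase i = {j, k, l})
    (h1 : (Finset.univ.erase i).erase j = {k, l})
    (h2 : (Finset.univ.erase i).erase k = {j, l})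
    (h3 : (Finset.univ.erase i).erase l = {j, k})
    (hij : i ≠ j) (hik : i ≠ k) (hil : i ≠ l)
    (hjk : j ≠ k) (hjl : j ≠ l) (hkl : k ≠ l)
    (hD : DY (yc r i) (yc r j) (yc r k) (yc r l)) :
    solidAngle r i = 2 * Real.pi := by
  have hy := yc_gt_one hr
  have hQ : QY (yc r i) (yc r j) (yc r k) (yc r l) ≤ 0 :=
    QY_nonpos_of_DY (by linarith [hy j]) (by linarith [hy k]) (by linarith [hy l]) hD
  have hpi : 0 < yc r i := by linarith [hy i]
  have hpj : 0 < yc r j := by linarith [hy j]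
  have hpk : 0 < yc r k := by linarith [hy k]
  have hpl : 0 < yc r l := by linarith [hy l]
  have e1 : betaAngle r i j = Real.pi := by
    rw [beta_eq r hr i j k l hij hkl h1, Real.arccos_eq_pi]
    exact arg_le_neg_one hpi hpj hpk hpl hQ (T_nonpos_first (hy i) (hy j) (hy k) (hy l) hD)
  have e2 : betaAngle r i k = Real.pi := by
    rw [beta_eq r hr i k j l hik hjl h2, Real.arccos_eq_pi]
    refine arg_le_neg_one hpi hpk hpj hpl ?_
      (T_nonpos_first (hy i) (hy k) (hy j) (hy l) (DY_213 hD))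
    rw [show QY (yc r i) (yc r k) (yc r j) (yc r l)
      = QY (yc r i) (yc r j) (yc r k) (yc r l) by unfold QY; ring]
    exact hQ
  have e3 : betaAngle r i l = Real.pi := by
    rw [beta_eq r hr i l j k hil hjk h3, Real.arccos_eq_pi]
    refine arg_le_neg_one hpi hpl hpj hpk ?_
      (T_nonpos_first (hy i) (hy l) (hy j) (hy k) (DY_312 hD))
    rw [show QY (yc r i) (yc r l) (yc r j) (yc r k)
      = QY (yc r i) (yc r j) (yc r k) (yc r l) by unfold QY; ring]
    exact hQ
  have hnj : j ∉ ({k, l} : Finset (Fin 4)) := by simp [hjk, hjl]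
  unfold solidAngle
  rw [herase]
  rw [Finset.sum_insert hnj, Finset.sum_pair hkl, e1, e2, e3]
  ring

lemma solidAngle_eq_zero (r : Fin 4 → ℝ) (hr : ∀ m, 0 < r m) (i j k l : Fin 4)
    (herase : Finset.univ.erase i = {j, k, l})
    (h1 : (Finset.univ.erase i).erase j = {k, l})
    (h2 : (Finset.univ.erase i).erase k = {j, l})
    (h3 : (Finset.univ.erase i).erase l = {j, k})
    (hij : i ≠ j) (hik : i ≠ k) (hil : i ≠ l)
    (hjk : j ≠ k) (hjl : j ≠ l) (hkl : k ≠ l)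
    (hD : DY (yc r j) (yc r i) (yc r k) (yc r l)) :
    solidAngle r i = 0 := by
  have hy := yc_gt_one hr
  have hQ0 : QY (yc r j) (yc r i) (yc r k) (yc r l) ≤ 0 :=
    QY_nonpos_of_DY (by linarith [hy i]) (by linarith [hy k]) (by linarith [hy l]) hD
  have hpi : 0 < yc r i := by linarith [hy i]
  have hpj : 0 < yc r j := by linarith [hy j]
  have hpk : 0 < yc r k := by linarith [hy k]
  have hpl : 0 < yc r l := by linarith [hy l]
  have e1 : betaAngle r i j = Real.pi := by
    rw [beta_eq r hr i j k l hij hkl h1, Real.arccos_eq_pi]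
    refine arg_le_neg_one hpi hpj hpk hpl ?_
      (T_nonpos_second (hy i) (hy j) (hy k) (hy l) hD)
    rw [show QY (yc r i) (yc r j) (yc r k) (yc r l)
      = QY (yc r j) (yc r i) (yc r k) (yc r l) by unfold QY; ring]
    exact hQ0
  have e2 : betaAngle r i k = 0 := by
    rw [beta_eq r hr i k j l hik hjl h2, Real.arccos_eq_zero]
    refine arg_ge_one hpi hpk hpj hpl ?_
      (T_nonneg_third (hy i) (hy k) (hy j) (hy l) hD)
    rw [show QY (yc r i) (yc r k) (yc r j) (yc r l)
      = QY (yc r j) (yc r i) (yc r k) (yc r l) by unfold QY; ring]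
    exact hQ0
  have e3 : betaAngle r i l = 0 := by
    rw [beta_eq r hr i l j k hil hjk h3, Real.arccos_eq_zero]
    refine arg_ge_one hpi hpl hpj hpk ?_
      (T_nonneg_third (hy i) (hy l) (hy j) (hy k) (DY_132 hD))
    rw [show QY (yc r i) (yc r l) (yc r j) (yc r k)
      = QY (yc r j) (yc r i) (yc r k) (yc r l) by unfold QY; ring]
    exact hQ0
  have hnj : j ∉ ({k, l} : Finset (Fin 4)) := by simp [hjk, hjl]
  unfold solidAngle
  rw [herase]
  rw [Finset.sum_insert hnj, Finset.sum_pair hkl, e1, e2, e3]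
  ring


lemma contYc (m : Fin 4) :
    ContinuousOn (fun r : Fin 4 → ℝ => yc r m) {r : Fin 4 → ℝ | ∀ n, 0 < r n} := by
  apply ContinuousOn.div
  · exact (Real.continuous_cosh.comp (continuous_apply m)).continuousOn
  · exact (Real.continuous_sinh.comp (continuous_apply m)).continuousOn
  · intro x hx
    have : 0 < Real.sinh (x m) := by
      have := hx m
      positivity
    exact this.ne'

lemma contBeta (i j : Fin 4) :
    ContinuousOn (fun r : Fin 4 → ℝ => betaAngle r i j)
      {r : Fin 4 → ℝ | ∀ n, 0 < r n} := by
  unfold betaAngle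
  apply Real.continuous_arccos.comp_continuousOn
  apply ContinuousOn.mul
  · apply ContinuousOn.div
    · apply Continuous.continuousOn
      apply Continuous.mul
      · exact (Real.continuous_sinh.comp (continuous_apply i)).mul
          (Real.continuous_sinh.comp (continuous_apply j))
      · exact Real.continuous_sqrt.comp (continuous_finset_prod _
          (fun m _ => Real.continuous_sinh.comp (continuous_apply m)))
    · apply Continuous.continuousOn
      apply continuous_const.mul
      exact Real.continuous_sqrt.comp (continuous_finset_prod _
        (fun m _ => Real.continuous_sinh.comp
          (((continuous_apply i).add (continuous_apply j)).add (continuous_apply m))))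
    · intro x hx
      have hp : 0 < ∏ m ∈ (Finset.univ.erase i).erase j, Real.sinh (x i + x j + x m) := by
        apply Finset.prod_pos
        intro m _
        have h1 := hx i; have h2 := hx j; have h3 := hx m
        have : 0 < x i + x j + x m := by linarith
        positivity
      have : 0 < 4 * Real.sqrt (∏ m ∈ (Finset.univ.erase i).erase j,
          Real.sinh (x i + x j + x m)) := by positivity
      exact this.ne'
  · have hQ : ContinuousOn Qh {r : Fin 4 → ℝ | ∀ n, 0 < r n} := by
      unfold Qh
      exact (((continuousOn_finset_sum _ (fun m _ => contYc m)).pow 2).sub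
        (continuousOn_const.mul (continuousOn_finset_sum _ (fun m _ => (contYc m).pow 2)))).add
        continuousOn_const
    exact (hQ.sub (((contYc i).add (contYc j)).pow 2)).add
      (((continuousOn_finset_sum _ (fun m _ => contYc m)).pow 2).sub
        (continuousOn_const.mul (continuousOn_finset_prod _ (fun m _ => contYc m))))

lemma contSolid (i : Fin 4) :
    ContinuousOn (fun r : Fin 4 → ℝ => solidAngle r i)
      {r : Fin 4 → ℝ | ∀ n, 0 < r n} := by
  unfold solidAngle
  exact (continuousOn_finset_sum _ (fun j _ => contBeta i j)).sub continuousOn_const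


lemma Qh_eq03 (r : Fin 4 → ℝ) :
    Qh r = QY (yc r 0) (yc r 1) (yc r 2) (yc r 3) := by
  unfold Qh QY
  rw [Fin.sum_univ_four, Fin.sum_univ_four]
  all_goals ring

end ExtraLemmas

/-- The extended solid angle `α̃ᵢ` is continuous on `(0,∞)⁴`. -/
theorem stmt5 (i : Fin 4) :
    ContinuousOn (fun r => tildeAlpha r i) {r : Fin 4 → ℝ | ∀ m, 0 < r m} := by
  apply (contSolid i).congr
  intro r hr
  have hr' : ∀ m, 0 < r m := hr
  by_cases hW : r ∈ OmegaSet
  · show tildeAlpha r i = solidAngle r i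
    unfold tildeAlpha
    rw [if_pos hW]
  · have hQ : Qh r ≤ 0 := le_of_not_gt fun hq => hW ⟨hr', hq⟩
    have hy := yc_gt_one hr'
    have hQY : QY (yc r 0) (yc r 1) (yc r 2) (yc r 3) ≤ 0 := by
      rw [← Qh_eq03 r]; exact hQ
    have hcov := QY_cover (hy 0) (hy 1) (hy 2) (hy 3) hQY
    fin_cases i <;> rcases hcov with h | h | h | h
    · have hD : r ∈ Dset 0 := (Dset_iff r 0 1 2 3 (by decide) (by decide) (by decide)
        (by decide)).2 ⟨hr', h⟩
      show tildeAlpha r 0 = solidAngle r 0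
      unfold tildeAlpha
      rw [if_neg hW, if_pos hD]
      exact (solidAngle_eq_two_pi r hr' 0 1 2 3 (by decide) (by decide) (by decide)
        (by decide) (by decide) (by decide) (by decide) (by decide) (by decide)
        (by decide) h).symm
    · have hnD : r ∉ Dset 0 := by
        intro hD0
        have h0 := ((Dset_iff r 0 1 2 3 (by decide) (by decide) (by decide)
          (by decide)).1 hD0).2
        exact DY_not_two (hy 2) (hy 3) h0 h
      show tildeAlpha r 0 = solidAngle r 0
      unfold tildeAlpha
      rw [if_neg hW, if_neg hnD]
      exact (solidAngle_eq_zero r hr' 0 1 2 3 (by decide) (by decide) (by decide)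
        (by decide) (by decide) (by decide) (by decide) (by decide) (by decide)
        (by decide) h).symm
    · have hnD : r ∉ Dset 0 := by
        intro hD0
        have h0 := ((Dset_iff r 0 2 1 3 (by decide) (by decide) (by decide)
          (by decide)).1 hD0).2
        exact DY_not_two (hy 1) (hy 3) h0 h
      show tildeAlpha r 0 = solidAngle r 0
      unfold tildeAlpha
      rw [if_neg hW, if_neg hnD]
      exact (solidAngle_eq_zero r hr' 0 2 1 3 (by decide) (by decide) (by decide)
        (by decide) (by decide) (by decide) (by decide) (by decide) (by decide)
        (by decide) h).symm
    · have hnD : r ∉ Dset 0 := by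
        intro hD0
        have h0 := ((Dset_iff r 0 3 1 2 (by decide) (by decide) (by decide)
          (by decide)).1 hD0).2
        exact DY_not_two (hy 1) (hy 2) h0 h
      show tildeAlpha r 0 = solidAngle r 0
      unfold tildeAlpha
      rw [if_neg hW, if_neg hnD]
      exact (solidAngle_eq_zero r hr' 0 3 1 2 (by decide) (by decide) (by decide)
        (by decide) (by decide) (by decide) (by decide) (by decide) (by decide)
        (by decide) h).symm
    · have hnD : r ∉ Dset 1 := by
        intro hD0
        have h0 := ((Dset_iff r 1 0 2 3 (by decide) (by decide) (by decide)
          (by decide)).1 hD0).2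
        exact DY_not_two (hy 2) (hy 3) h0 h
      show tildeAlpha r 1 = solidAngle r 1
      unfold tildeAlpha
      rw [if_neg hW, if_neg hnD]
      exact (solidAngle_eq_zero r hr' 1 0 2 3 (by decide) (by decide) (by decide)
        (by decide) (by decide) (by decide) (by decide) (by decide) (by decide)
        (by decide) h).symm
    · have hD : r ∈ Dset 1 := (Dset_iff r 1 0 2 3 (by decide) (by decide) (by decide)
        (by decide)).2 ⟨hr', h⟩
      show tildeAlpha r 1 = solidAngle r 1
      unfold tildeAlpha
      rw [if_neg hW, if_pos hD]
      exact (solidAngle_eq_two_pi r hr' 1 0 2 3 (by decide) (by decide) (by decide)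
        (by decide) (by decide) (by decide) (by decide) (by decide) (by decide)
        (by decide) h).symm
    · have hnD : r ∉ Dset 1 := by
        intro hD0
        have h0 := ((Dset_iff r 1 2 0 3 (by decide) (by decide) (by decide)
          (by decide)).1 hD0).2
        exact DY_not_two (hy 0) (hy 3) h0 (DY_213 h)
      show tildeAlpha r 1 = solidAngle r 1
      unfold tildeAlpha
      rw [if_neg hW, if_neg hnD]
      exact (solidAngle_eq_zero r hr' 1 2 0 3 (by decide) (by decide) (by decide)
        (by decide) (by decide) (by decide) (by decide) (by decide) (by decide)
        (by decide) (DY_213 h)).symm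
    · have hnD : r ∉ Dset 1 := by
        intro hD0
        have h0 := ((Dset_iff r 1 3 0 2 (by decide) (by decide) (by decide)
          (by decide)).1 hD0).2
        exact DY_not_two (hy 0) (hy 2) h0 (DY_213 h)
      show tildeAlpha r 1 = solidAngle r 1
      unfold tildeAlpha
      rw [if_neg hW, if_neg hnD]
      exact (solidAngle_eq_zero r hr' 1 3 0 2 (by decide) (by decide) (by decide)
        (by decide) (by decide) (by decide) (by decide) (by decide) (by decide)
        (by decide) (DY_213 h)).symm
    · have hnD : r ∉ Dset 2 := by
        intro hD0
        have h0 := ((Dset_iff r 2 0 1 3 (by decide) (by decide) (by decide)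
          (by decide)).1 hD0).2
        exact DY_not_two (hy 1) (hy 3) h0 (DY_213 h)
      show tildeAlpha r 2 = solidAngle r 2
      unfold tildeAlpha
      rw [if_neg hW, if_neg hnD]
      exact (solidAngle_eq_zero r hr' 2 0 1 3 (by decide) (by decide) (by decide)
        (by decide) (by decide) (by decide) (by decide) (by decide) (by decide)
        (by decide) (DY_213 h)).symm
    · have hnD : r ∉ Dset 2 := by
        intro hD0
        have h0 := ((Dset_iff r 2 1 0 3 (by decide) (by decide) (by decide)
          (by decide)).1 hD0).2
        exact DY_not_two (hy 0) (hy 3) h0 (DY_213 h)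
      show tildeAlpha r 2 = solidAngle r 2
      unfold tildeAlpha
      rw [if_neg hW, if_neg hnD]
      exact (solidAngle_eq_zero r hr' 2 1 0 3 (by decide) (by decide) (by decide)
        (by decide) (by decide) (by decide) (by decide) (by decide) (by decide)
        (by decide) (DY_213 h)).symm
    · have hD : r ∈ Dset 2 := (Dset_iff r 2 0 1 3 (by decide) (by decide) (by decide)
        (by decide)).2 ⟨hr', h⟩
      show tildeAlpha r 2 = solidAngle r 2
      unfold tildeAlpha
      rw [if_neg hW, if_pos hD]
      exact (solidAngle_eq_two_pi r hr' 2 0 1 3 (by decide) (by decide) (by decide)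
        (by decide) (by decide) (by decide) (by decide) (by decide) (by decide)
        (by decide) h).symm
    · have hnD : r ∉ Dset 2 := by
        intro hD0
        have h0 := ((Dset_iff r 2 3 0 1 (by decide) (by decide) (by decide)
          (by decide)).1 hD0).2
        exact DY_not_two (hy 0) (hy 1) h0 (DY_312 h)
      show tildeAlpha r 2 = solidAngle r 2
      unfold tildeAlpha
      rw [if_neg hW, if_neg hnD]
      exact (solidAngle_eq_zero r hr' 2 3 0 1 (by decide) (by decide) (by decide)
        (by decide) (by decide) (by decide) (by decide) (by decide) (by decide)
        (by decide) (DY_312 h)).symm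
    · have hnD : r ∉ Dset 3 := by
        intro hD0
        have h0 := ((Dset_iff r 3 0 1 2 (by decide) (by decide) (by decide)
          (by decide)).1 hD0).2
        exact DY_not_two (hy 1) (hy 2) h0 (DY_312 h)
      show tildeAlpha r 3 = solidAngle r 3
      unfold tildeAlpha
      rw [if_neg hW, if_neg hnD]
      exact (solidAngle_eq_zero r hr' 3 0 1 2 (by decide) (by decide) (by decide)
        (by decide) (by decide) (by decide) (by decide) (by decide) (by decide)
        (by decide) (DY_312 h)).symm
    · have hnD : r ∉ Dset 3 := by
        intro hD0
        have h0 := ((Dset_iff r 3 1 0 2 (by decide) (by decide) (by decide)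
          (by decide)).1 hD0).2
        exact DY_not_two (hy 0) (hy 2) h0 (DY_312 h)
      show tildeAlpha r 3 = solidAngle r 3
      unfold tildeAlpha
      rw [if_neg hW, if_neg hnD]
      exact (solidAngle_eq_zero r hr' 3 1 0 2 (by decide) (by decide) (by decide)
        (by decide) (by decide) (by decide) (by decide) (by decide) (by decide)
        (by decide) (DY_312 h)).symm
    · have hnD : r ∉ Dset 3 := by
        intro hD0
        have h0 := ((Dset_iff r 3 2 0 1 (by decide) (by decide) (by decide)
          (by decide)).1 hD0).2
        exact DY_not_two (hy 0) (hy 1) h0 (DY_312 h)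
      show tildeAlpha r 3 = solidAngle r 3
      unfold tildeAlpha
      rw [if_neg hW, if_neg hnD]
      exact (solidAngle_eq_zero r hr' 3 2 0 1 (by decide) (by decide) (by decide)
        (by decide) (by decide) (by decide) (by decide) (by decide) (by decide)
        (by decide) (DY_312 h)).symm
    · have hD : r ∈ Dset 3 := (Dset_iff r 3 0 1 2 (by decide) (by decide) (by decide)
        (by decide)).2 ⟨hr', h⟩
      show tildeAlpha r 3 = solidAngle r 3
      unfold tildeAlpha
      rw [if_neg hW, if_pos hD]
      exact (solidAngle_eq_two_pi r hr' 3 0 1 2 (by decide) (by decide) (by decide)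
        (by decide) (by decide) (by decide) (by decide) (by decide) (by decide)
        (by decide) h).symm
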